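/- Let κ > 0, let S : [0, κ] → ℝ be continuous, and let τ ∈ [0, κ]. Then ∫_0^1 μ⁻¹ ( ∫_0^τ S(t) e^{−(τ−t)/μ} dt + ∫_τ^κ S(t) e^{−(t−τ)/μ} dt ) dμ = ∫_0^κ S(t) E₁(|τ − t|) dt, all integrals being well defined. (This is the angular integration step converting the formally solved radiative transfer equation with isotropic source S into a Fredholm integral with kernel E₁.) -/

import Mathlib

/-!
Both sides are the two iterated integrals of `(μ, t) ↦ μ⁻¹ S(t) e^{-|τ - t|/μ}` over
`(0, 1] × (0, κ]`. Fubini applies because `∫_0^κ e^{-|τ - t|/μ} dt ≤ 2μ`, which cancels the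
`μ⁻¹` and bounds the inner integral of the absolute value by `2 sup |S|`, uniformly in `μ`.
-/

/-- The exponential integral of order 1: `E₁(x) = ∫_0^1 μ⁻¹ e^{-x/μ} dμ`. -/
noncomputable def expIntegral₁ (x : ℝ) : ℝ := ∫ μ in (0:ℝ)..1, μ⁻¹ * Real.exp (-x / μ)

open MeasureTheory Set Function Real intervalIntegral

lemma integral_exp_neg_div_le {μ : ℝ} (hμ : 0 < μ) (L : ℝ) :
    ∫ x in (0:ℝ)..L, exp (-x / μ) ≤ μ := by
  have hderiv (x : ℝ) : HasDerivAt (fun x => -μ * exp (-x / μ)) (exp (-x / μ)) x := by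
    refine ((((hasDerivAt_neg x).div_const μ).exp).const_mul (-μ)).congr_deriv ?_
    field_simp
  rw [integral_eq_sub_of_hasDerivAt (fun x _ => hderiv x)
    (Continuous.intervalIntegrable (by fun_prop) _ _)]
  simp only [neg_zero, zero_div, exp_zero]
  nlinarith [exp_pos (-L / μ)]

lemma integral_mul_exp_neg_abs_sub_div {g : ℝ → ℝ} {a b τ : ℝ} (μ : ℝ) (hτ : τ ∈ Icc a b)
    (hg : IntervalIntegrable g volume a b) :
    ∫ t in a..b, g t * exp (-|τ - t| / μ) =
      (∫ t in a..τ, g t * exp (-(τ - t) / μ)) + ∫ t in τ..b, g t * exp (-(t - τ) / μ) := by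
  have hgk := hg.mul_continuousOn (g := fun t => exp (-|τ - t| / μ)) (by fun_prop)
  have hτ' := Icc_subset_uIcc hτ
  rw [← integral_add_adjacent_intervals (b := τ) (hgk.mono_set (uIcc_subset_uIcc_left hτ'))
    (hgk.mono_set (uIcc_subset_uIcc_right hτ'))]
  congr 1 <;> refine integral_congr fun t ht => ?_
  · rw [uIcc_of_le hτ.1] at ht
    simp only [abs_of_nonneg (sub_nonneg.2 ht.2)]
  · rw [uIcc_of_le hτ.2] at ht
    simp only [abs_of_nonpos (sub_nonpos.2 ht.1), neg_sub]

lemma integral_exp_neg_abs_sub_div_le {a b τ μ : ℝ} (hμ : 0 < μ) (hτ : τ ∈ Icc a b) :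
    ∫ t in a..b, exp (-|τ - t| / μ) ≤ 2 * μ := by
  have hsplit := integral_mul_exp_neg_abs_sub_div (g := fun _ => 1) μ hτ intervalIntegrable_const
  simp only [one_mul] at hsplit
  rw [hsplit, integral_comp_sub_left (fun x => exp (-x / μ)),
    integral_comp_sub_right (fun x => exp (-x / μ)), sub_self]
  linarith [integral_exp_neg_div_le hμ (τ - a), integral_exp_neg_div_le hμ (b - τ)]

lemma integrable_prod_inv_mul_exp_neg_abs_sub_div {S : ℝ → ℝ} {a b τ C : ℝ} (m : ℝ)
    (hτ : τ ∈ Icc a b) (hS : AEStronglyMeasurable S (volume.restrict (Ioc a b))) (hC0 : 0 ≤ C)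
    (hC : ∀ t ∈ Ioc a b, ‖S t‖ ≤ C) :
    Integrable (uncurry fun μ t => μ⁻¹ * (S t * exp (-|τ - t| / μ)))
      ((volume.restrict (Ioc 0 m)).prod (volume.restrict (Ioc a b))) := by
  set f : ℝ → ℝ → ℝ := fun μ t => μ⁻¹ * (S t * exp (-|τ - t| / μ))
  have hmeas : AEStronglyMeasurable (uncurry f)
      ((volume.restrict (Ioc 0 m)).prod (volume.restrict (Ioc a b))) := by
    have hk : Measurable fun p : ℝ × ℝ => p.1⁻¹ * exp (-|τ - p.2| / p.1) := by fun_prop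
    refine (hS.comp_snd.mul hk.aestronglyMeasurable).congr (ae_of_all _ fun p => ?_)
    simp only [uncurry, f, Pi.mul_apply]
    ring
  have hpointwise : ∀ μ > 0, ∀ t ∈ Ioc a b, ‖f μ t‖ ≤ μ⁻¹ * C * exp (-|τ - t| / μ) := by
    intro μ hμ t ht
    rw [norm_mul, norm_mul, norm_of_nonneg (inv_pos.2 hμ).le, norm_of_nonneg (exp_pos _).le,
      ← mul_assoc]
    gcongr
    exact hC t ht
  have hsection : ∀ μ > 0, Integrable (f μ) (volume.restrict (Ioc a b)) := by
    intro μ hμ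
    have hk : Continuous fun t => exp (-|τ - t| / μ) := by fun_prop
    refine Integrable.of_bound ((hS.mul hk.aestronglyMeasurable).const_mul μ⁻¹) (μ⁻¹ * C) ?_
    filter_upwards [ae_restrict_mem measurableSet_Ioc] with t ht
    have hexp : exp (-|τ - t| / μ) ≤ 1 :=
      exp_le_one_iff.2 (by rw [neg_div, neg_nonpos]; positivity)
    calc ‖f μ t‖ ≤ μ⁻¹ * C * exp (-|τ - t| / μ) := hpointwise μ hμ t ht
      _ ≤ μ⁻¹ * C := mul_le_of_le_one_right (by positivity) hexp
  have hnorm : ∀ μ ∈ Ioc 0 m, ∫ t in Ioc a b, ‖f μ t‖ ≤ 2 * C := by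
    rintro μ ⟨hμ, -⟩
    calc ∫ t in Ioc a b, ‖f μ t‖ ≤ ∫ t in Ioc a b, μ⁻¹ * C * exp (-|τ - t| / μ) :=
          setIntegral_mono_on (hsection μ hμ).norm
            (Continuous.integrableOn_Ioc (by fun_prop)) measurableSet_Ioc (hpointwise μ hμ)
      _ = μ⁻¹ * C * ∫ t in a..b, exp (-|τ - t| / μ) := by
          rw [MeasureTheory.integral_const_mul, integral_of_le (hτ.1.trans hτ.2)]
      _ ≤ μ⁻¹ * C * (2 * μ) := by
          gcongr
          exact integral_exp_neg_abs_sub_div_le hμ hτ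
      _ = 2 * C := by field_simp
  refine (integrable_prod_iff hmeas).2
    ⟨(ae_restrict_mem measurableSet_Ioc).mono fun μ hμ => hsection μ hμ.1, ?_⟩
  refine (integrable_const (2 * C)).mono' hmeas.norm.integral_prod_right' ?_
  filter_upwards [ae_restrict_mem measurableSet_Ioc] with μ hμ
  rw [norm_of_nonneg (integral_nonneg fun _ => norm_nonneg _)]
  exact hnorm μ hμ

lemma intervalIntegral_swap_of_integrable_prod {E : Type*} [NormedAddCommGroup E]
    [NormedSpace ℝ E] {f : ℝ → ℝ → E} {F G : ℝ → E} {a b c d : ℝ} (hab : a ≤ b) (hcd : c ≤ d)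
    (hf : Integrable (uncurry f) ((volume.restrict (Ioc a b)).prod (volume.restrict (Ioc c d))))
    (hF : ∀ x ∈ Ioc a b, ∫ y in Ioc c d, f x y = F x)
    (hG : ∀ y ∈ Ioc c d, ∫ x in Ioc a b, f x y = G y) :
    IntervalIntegrable F volume a b ∧ IntervalIntegrable G volume c d ∧
      ∫ x in a..b, F x = ∫ y in c..d, G y := by
  have hF' : (fun x => ∫ y in Ioc c d, f x y) =ᵐ[volume.restrict (Ioc a b)] F :=
    (ae_restrict_mem measurableSet_Ioc).mono hF
  have hG' : (fun y => ∫ x in Ioc a b, f x y) =ᵐ[volume.restrict (Ioc c d)] G :=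
    (ae_restrict_mem measurableSet_Ioc).mono hG
  refine ⟨(intervalIntegrable_iff_integrableOn_Ioc_of_le hab).2 (hf.integral_prod_left.congr hF'),
    (intervalIntegrable_iff_integrableOn_Ioc_of_le hcd).2 (hf.integral_prod_right.congr hG'), ?_⟩
  rw [integral_of_le hab, integral_of_le hcd, ← integral_congr_ae hF', ← integral_congr_ae hG']
  exact integral_integral_swap hf

/-- The angular integration step converting the formally solved radiative transfer
equation with isotropic source `S` into a Fredholm integral with kernel `E₁`:
for `κ > 0`, `S` continuous on `[0, κ]` and `τ ∈ [0, κ]`,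
`∫_0^1 μ⁻¹ (∫_0^τ S(t) e^{-(τ-t)/μ} dt + ∫_τ^κ S(t) e^{-(t-τ)/μ} dt) dμ
  = ∫_0^κ S(t) E₁(|τ-t|) dt`, all integrals being well defined. -/
theorem angular_integration_fredholm
    (κ : ℝ) (hκ : 0 < κ) (S : ℝ → ℝ) (hS : ContinuousOn S (Set.Icc 0 κ))
    (τ : ℝ) (hτ : τ ∈ Set.Icc (0:ℝ) κ) :
    IntervalIntegrable
      (fun μ : ℝ => μ⁻¹ *
        ((∫ t in (0:ℝ)..τ, S t * Real.exp (-(τ - t) / μ)) +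
          ∫ t in τ..κ, S t * Real.exp (-(t - τ) / μ)))
      MeasureTheory.volume 0 1 ∧
    IntervalIntegrable (fun t : ℝ => S t * expIntegral₁ |τ - t|)
      MeasureTheory.volume 0 κ ∧
    (∫ μ in (0:ℝ)..1, μ⁻¹ *
        ((∫ t in (0:ℝ)..τ, S t * Real.exp (-(τ - t) / μ)) +
          ∫ t in τ..κ, S t * Real.exp (-(t - τ) / μ))) =
      ∫ t in (0:ℝ)..κ, S t * expIntegral₁ |τ - t| := by
  obtain ⟨C, hC⟩ := isCompact_Icc.exists_bound_of_continuousOn hS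
  have hC0 : 0 ≤ C := (norm_nonneg _).trans (hC 0 ⟨le_rfl, hκ.le⟩)
  have hInt := integrable_prod_inv_mul_exp_neg_abs_sub_div 1 hτ
    ((hS.mono Ioc_subset_Icc_self).aestronglyMeasurable measurableSet_Ioc) hC0
    (fun t ht => hC t (Ioc_subset_Icc_self ht))
  refine intervalIntegral_swap_of_integrable_prod zero_le_one hκ.le hInt (fun μ _ => ?_)
    (fun t _ => ?_)
  · rw [MeasureTheory.integral_const_mul, ← integral_of_le hκ.le,
      integral_mul_exp_neg_abs_sub_div μ hτ (hS.intervalIntegrable_of_Icc hκ.le)]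
  · simp_rw [mul_left_comm _ (S t), MeasureTheory.integral_const_mul, expIntegral₁,
      integral_of_le zero_le_one]
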